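/- arXiv:2510.07391 — 3 statements merged into one kernel-verified Lean document; each statement's English description precedes it below -/
import Mathlib

section
/- Let G be a group, K a subgroup of G, ρ : K → ℂ^× a group homomorphism, and let s, z ∈ G satisfy sKs^{−1} = K, zKz^{−1} = K, ρ(sks^{−1}) = ρ(k) and ρ(zkz^{−1}) = ρ(k) for all k ∈ K, and suppose the commutator [s, z] := s z s^{−1} z^{−1} lies in K. Then for all k, k′ ∈ K, the commutator [sk, zk′] lies in K and ρ([sk, zk′]) = ρ([s, z]). In particular, if ρ([s, z]) ≠ 1, then sk and zk′ do not commute for any k, k′ ∈ K. -/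
/-!
Let `N` be the group of elements of `G` that normalize `K` and fix `ρ` under conjugation, and let
`L = ker ρ`, viewed in `G`. Then `K ≤ N`, `N` normalizes `L`, and `⁅g, k⁆ ∈ L` for `g ∈ N`,
`k ∈ K`: the image of `K` is central in `N / L`. Hence `⁅s * k, z * k'⁆ ≡ ⁅s, z⁆` modulo `L`,
and `ρ` is constant on the `L`-cosets contained in `K`.
-/

open scoped commutatorElement

namespace MonoidHom

variable {G : Type*} [Group G] {K : Subgroup G}

section MulOneClass

variable {M : Type*} [MulOneClass M] (ρ : K →* M)

def conjStabilizer : Subgroup G where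
  carrier := {g | (∀ k, g * k * g⁻¹ ∈ K ↔ k ∈ K) ∧
    ∀ k (hk : k ∈ K) (hgk : g * k * g⁻¹ ∈ K), ρ ⟨g * k * g⁻¹, hgk⟩ = ρ ⟨k, hk⟩}
  one_mem' := by simp
  mul_mem' := by
    rintro g h ⟨hgK, hgρ⟩ ⟨hhK, hhρ⟩
    have conj_mul (k : G) : g * h * k * (g * h)⁻¹ = g * (h * k * h⁻¹) * g⁻¹ := by group
    refine ⟨fun k => by rw [conj_mul, hgK, hhK], fun k hk hghk => ?_⟩
    simp only [conj_mul] at hghk ⊢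
    rw [hgρ _ ((hhK k).2 hk), hhρ k hk]
  inv_mem' := by
    rintro g ⟨hgK, hgρ⟩
    have conj_inv (k : G) : g * (g⁻¹ * k * g⁻¹⁻¹) * g⁻¹ = k := by group
    refine ⟨fun k => by rw [← hgK, conj_inv], fun k hk hgk => ?_⟩
    have h := hgρ _ hgk (by rwa [conj_inv])
    simp only [conj_inv] at h
    exact h.symm

variable {ρ}

theorem mem_ker_map {x : G} : x ∈ ρ.ker.map K.subtype ↔ ∃ hx : x ∈ K, ρ ⟨x, hx⟩ = 1 := by
  simp [Subgroup.mem_map]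

theorem conj_mem_ker_map {g x : G} (hg : g ∈ ρ.conjStabilizer)
    (hx : x ∈ ρ.ker.map K.subtype) : g * x * g⁻¹ ∈ ρ.ker.map K.subtype := by
  obtain ⟨hxK, hxρ⟩ := mem_ker_map.1 hx
  have hgx : g * x * g⁻¹ ∈ K := (hg.1 x).2 hxK
  exact mem_ker_map.2 ⟨hgx, (hg.2 x hxK hgx).trans hxρ⟩

theorem map_eq_of_inv_mul_mem_ker_map {x y : G} (hx : x ∈ K)
    (hxy : x⁻¹ * y ∈ ρ.ker.map K.subtype) : ∃ hy : y ∈ K, ρ ⟨y, hy⟩ = ρ ⟨x, hx⟩ := by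
  obtain ⟨hxyK, hxyρ⟩ := mem_ker_map.1 hxy
  have hy : y = x * (x⁻¹ * y) := by group
  have hyK : y ∈ K := hy ▸ K.mul_mem hx hxyK
  have hy' : (⟨y, hyK⟩ : K) = ⟨x, hx⟩ * ⟨x⁻¹ * y, hxyK⟩ := Subtype.ext hy
  exact ⟨hyK, by rw [hy', map_mul, hxyρ, mul_one]⟩

end MulOneClass

section Group

variable {M : Type*} [Group M] {ρ : K →* M}

theorem commutatorElement_mem_ker_map {g k : G} (hg : g ∈ ρ.conjStabilizer) (hk : k ∈ K) :
    ⁅g, k⁆ ∈ ρ.ker.map K.subtype := by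
  have hgk : g * k * g⁻¹ ∈ K := (hg.1 k).2 hk
  have hcomm : (⟨⁅g, k⁆, K.mul_mem hgk (K.inv_mem hk)⟩ : K) = ⟨g * k * g⁻¹, hgk⟩ * ⟨k, hk⟩⁻¹ :=
    rfl
  refine mem_ker_map.2 ⟨K.mul_mem hgk (K.inv_mem hk), ?_⟩
  rw [hcomm, map_mul, map_inv, hg.2 k hk hgk, mul_inv_cancel]

theorem inv_mul_commutatorElement_mul_right_mem_ker_map {a b k : G}
    (ha : a ∈ ρ.conjStabilizer) (hb : b ∈ ρ.conjStabilizer) (hk : k ∈ K) :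
    ⁅a, b⁆⁻¹ * ⁅a, b * k⁆ ∈ ρ.ker.map K.subtype := by
  have h : ⁅a, b⁆⁻¹ * ⁅a, b * k⁆ = b * ⁅a, k⁆ * b⁻¹ := by
    simp only [commutatorElement_def]; group
  rw [h]
  exact conj_mem_ker_map hb (commutatorElement_mem_ker_map ha hk)

theorem inv_mul_commutatorElement_mul_left_mem_ker_map {a b k : G}
    (ha : a ∈ ρ.conjStabilizer) (hb : b ∈ ρ.conjStabilizer) (hk : k ∈ K) :
    ⁅a, b⁆⁻¹ * ⁅a * k, b⁆ ∈ ρ.ker.map K.subtype := by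
  have h : ⁅a, b⁆⁻¹ * ⁅a * k, b⁆ = (⁅a, b⁆⁻¹ * a) * ⁅b, k⁆⁻¹ * (⁅a, b⁆⁻¹ * a)⁻¹ := by
    simp only [commutatorElement_def]; group
  have hab : ⁅a, b⁆ ∈ ρ.conjStabilizer :=
    mul_mem (mul_mem (mul_mem ha hb) (inv_mem ha)) (inv_mem hb)
  rw [h]
  exact conj_mem_ker_map (mul_mem (inv_mem hab) ha)
    (inv_mem (commutatorElement_mem_ker_map hb hk))

end Group

section CommGroup

variable {M : Type*} [CommGroup M] {ρ : K →* M}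

theorem le_conjStabilizer : K ≤ ρ.conjStabilizer := by
  intro k hk
  refine ⟨fun x => by rw [K.mul_mem_cancel_right (K.inv_mem hk), K.mul_mem_cancel_left hk],
    fun x hx hkx => ?_⟩
  have hconj : (⟨k * x * k⁻¹, hkx⟩ : K) = ⟨k, hk⟩ * ⟨x, hx⟩ * ⟨k, hk⟩⁻¹ := rfl
  rw [hconj, map_mul, map_mul, map_inv, mul_inv_cancel_comm]

theorem inv_mul_commutatorElement_mul_mul_mem_ker_map {a b k k' : G}
    (ha : a ∈ ρ.conjStabilizer) (hb : b ∈ ρ.conjStabilizer) (hk : k ∈ K) (hk' : k' ∈ K) :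
    ⁅a, b⁆⁻¹ * ⁅a * k, b * k'⁆ ∈ ρ.ker.map K.subtype := by
  have hbk' : b * k' ∈ ρ.conjStabilizer := mul_mem hb (le_conjStabilizer hk')
  have split : ⁅a, b⁆⁻¹ * ⁅a * k, b * k'⁆ =
      (⁅a, b⁆⁻¹ * ⁅a, b * k'⁆) * (⁅a, b * k'⁆⁻¹ * ⁅a * k, b * k'⁆) := by group
  rw [split]
  exact mul_mem (inv_mul_commutatorElement_mul_right_mem_ker_map ha hb hk')
    (inv_mul_commutatorElement_mul_left_mem_ker_map ha hbk' hk)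

end CommGroup

end MonoidHom

theorem stmt13
    (G : Type) [Group G] (K : Subgroup G) (ρ : ↥K →* ℂˣ) (s z : G)
    (hsK : ∀ k : G, s * k * s⁻¹ ∈ K ↔ k ∈ K)
    (hzK : ∀ k : G, z * k * z⁻¹ ∈ K ↔ k ∈ K)
    (hsρ : ∀ (k : G) (hk : k ∈ K), ρ ⟨s * k * s⁻¹, (hsK k).2 hk⟩ = ρ ⟨k, hk⟩)
    (hzρ : ∀ (k : G) (hk : k ∈ K), ρ ⟨z * k * z⁻¹, (hzK k).2 hk⟩ = ρ ⟨k, hk⟩)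
    (hc : s * z * s⁻¹ * z⁻¹ ∈ K) :
    ∀ k k' : G, k ∈ K → k' ∈ K →
      ∃ h : (s * k) * (z * k') * (s * k)⁻¹ * (z * k')⁻¹ ∈ K,
        ρ ⟨(s * k) * (z * k') * (s * k)⁻¹ * (z * k')⁻¹, h⟩ = ρ ⟨s * z * s⁻¹ * z⁻¹, hc⟩ ∧
        (ρ ⟨s * z * s⁻¹ * z⁻¹, hc⟩ ≠ 1 → (s * k) * (z * k') ≠ (z * k') * (s * k)) := by
  intro k k' hk hk'
  have hs : s ∈ ρ.conjStabilizer := ⟨hsK, fun k hk _ => hsρ k hk⟩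
  have hz : z ∈ ρ.conjStabilizer := ⟨hzK, fun k hk _ => hzρ k hk⟩
  obtain ⟨h, hρ⟩ := MonoidHom.map_eq_of_inv_mul_mem_ker_map (x := ⁅s, z⁆) hc
    (MonoidHom.inv_mul_commutatorElement_mul_mul_mem_ker_map hs hz hk hk')
  refine ⟨h, hρ, fun hne hcomm => hne (hρ.symm.trans ?_)⟩
  simp only [commutatorElement_eq_one_iff_mul_comm.2 hcomm]
  exact map_one ρ
end

section
/- There is no group homomorphism ρ† : N → ℂ^× whose restriction to K_{M⁰} equals ρ_{M⁰}, where N := M⁰ ∪ s̃·M⁰ is the normalizer of M⁰ in G⁰; that is, the character ρ_{M⁰} does not extend to N(ρ_{M⁰}). -/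
/-!
An element of `N` has diagonal or antidiagonal matrix part, and the antidiagonal ones are
`s̃ · M⁰`. Conjugation by `s̃` swaps diagonal entries, so for
`m = (diag(ζϖ_{E₂}, ϖ_{E₂}), ϖ_{E₄}⁻²)` the commutator `[s̃, m]` is `(diag(ζ⁻¹, ζ), 1) ∈ K_{M⁰}`,
where `ρ_{M⁰}` takes the value `η(N_{E₂/F} ζ) = η(ζ)² = -1`; a character of `N` is trivial on
commutators. The element `m` lies in `M⁰` because `N_{E₄/F}(ϖ_{E₄}) = ζϖ_F` (the constant
term of `X⁴ + ζϖ_F`) balances `N_{E₂/F}(-ζϖ_F) = (ζϖ_F)²`.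
-/

open Matrix
open scoped Classical

noncomputable section

/-! ## The extension of a character of `Fˣ` to `F` by zero -/

/-- The extension of a homomorphism `η : Fˣ → ℂˣ` to a function `F → ℂ` by zero. -/
def etaExt {F : Type} [Field F] (η : Fˣ →* ℂˣ) (x : F) : ℂ :=
  if h : x = 0 then 0 else (η (Units.mk0 x h) : ℂ)

section Setup

variable (F : Type) [Field F] (O : ValuationSubring F)

/-- For a field extension `E` of `F`, the valuation subring `O` of `F` acts on `E`. -/
instance valAlg (E : Type) [Field E] [Algebra F E] : Algebra ↥O E :=
  ((algebraMap F E).comp (algebraMap ↥O F)).toAlgebra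

/-- `x` is a unit of the integral closure `O_E` of `O` in `E`. -/
def IsUnitOfIC (E : Type) [Field E] [Algebra F E] (x : E) : Prop :=
  x ≠ 0 ∧ x ∈ integralClosure ↥O E ∧ x⁻¹ ∈ integralClosure ↥O E

/-- `x` lies in the maximal ideal `𝔭_E` of the integral closure `O_E` of `O` in `E`
(i.e. `x` belongs to `O_E` but is not a unit of `O_E`). -/
def InMaxIC (E : Type) [Field E] [Algebra F E] (x : E) : Prop :=
  x ∈ integralClosure ↥O E ∧ ¬ IsUnitOfIC F O E x

variable (E₂ E₄ : Type) [Field E₂] [Algebra F E₂] [Field E₄] [Algebra F E₄]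

/-- The condition cutting out `G⁰ ⊆ GL₂(E₂) × E₄ˣ`, namely
`N_{E₂/F}(det g) · N_{E₄/F}(z) = 1`. -/
def normCond (p : (Matrix (Fin 2) (Fin 2) E₂)ˣ × E₄ˣ) : Prop :=
  Algebra.norm F (p.1.val.det) * Algebra.norm F p.2.val = 1

/-- The first (matrix) component of `p` is a diagonal matrix. -/
def diagP (p : (Matrix (Fin 2) (Fin 2) E₂)ˣ × E₄ˣ) : Prop :=
  p.1.val 0 1 = 0 ∧ p.1.val 1 0 = 0

/-- The first (matrix) component of `p` is an antidiagonal matrix. -/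
def antidiagP (p : (Matrix (Fin 2) (Fin 2) E₂)ˣ × E₄ˣ) : Prop :=
  p.1.val 0 0 = 0 ∧ p.1.val 1 1 = 0

/-- The group `G⁰ = (GL₂(E₂) × E₄ˣ) ∩ SL₈(F)`, as a subset of `GL₂(E₂) × E₄ˣ`. -/
def G0set : Set ((Matrix (Fin 2) (Fin 2) E₂)ˣ × E₄ˣ) := {p | normCond F E₂ E₄ p}

/-- The Levi subgroup `M⁰` of `G⁰`: the elements `(diag(x,y), z)` of `G⁰`. -/
def M0set : Set ((Matrix (Fin 2) (Fin 2) E₂)ˣ × E₄ˣ) :=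
  {p | normCond F E₂ E₄ p ∧ diagP E₂ E₄ p}

/-- `K_{M⁰}`: the elements `(diag(x,y), z)` of `M⁰` with `x, y ∈ O_{E₂}ˣ` and
`z ∈ O_{E₄}ˣ`. -/
def KM0set : Set ((Matrix (Fin 2) (Fin 2) E₂)ˣ × E₄ˣ) :=
  {p | p ∈ M0set F E₂ E₄ ∧ IsUnitOfIC F O E₂ (p.1.val 0 0) ∧
    IsUnitOfIC F O E₂ (p.1.val 1 1) ∧ IsUnitOfIC F O E₄ p.2.val}

/-- The element `s̃ = ((0,1;-1,0), 1)` of `G⁰`, the matrix component as a unit. -/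
def sUnit : (Matrix (Fin 2) (Fin 2) E₂)ˣ where
  val := !![0, 1; -1, 0]
  inv := !![0, -1; 1, 0]
  val_inv := by
    ext i j; fin_cases i <;> fin_cases j <;>
      simp [Matrix.mul_apply, Fin.sum_univ_two, Matrix.one_apply]
  inv_val := by
    ext i j; fin_cases i <;> fin_cases j <;>
      simp [Matrix.mul_apply, Fin.sum_univ_two, Matrix.one_apply]

/-- The element `s̃ = ((0,1;-1,0), 1)` of `G⁰`. -/
def sElt : (Matrix (Fin 2) (Fin 2) E₂)ˣ × E₄ˣ := (sUnit E₂, 1)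

section lemmas

variable {F E₂ E₄}

lemma normCond_one : normCond F E₂ E₄ 1 := by
  simp [normCond]

lemma normCond_mul {p q : (Matrix (Fin 2) (Fin 2) E₂)ˣ × E₄ˣ}
    (hp : normCond F E₂ E₄ p) (hq : normCond F E₂ E₄ q) : normCond F E₂ E₄ (p * q) := by
  unfold normCond at *
  simp only [Prod.fst_mul, Prod.snd_mul, Units.val_mul, Matrix.det_mul, _root_.map_mul]
  rw [mul_mul_mul_comm, hp, hq, mul_one]

lemma fst_val_mul_inv (p : (Matrix (Fin 2) (Fin 2) E₂)ˣ × E₄ˣ) :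
    p.1.val * (p⁻¹).1.val = 1 := by
  rw [← Units.val_mul, ← Prod.fst_mul, mul_inv_cancel, Prod.fst_one, Units.val_one]

lemma fst_val_inv_mul (p : (Matrix (Fin 2) (Fin 2) E₂)ˣ × E₄ˣ) :
    (p⁻¹).1.val * p.1.val = 1 := by
  rw [← Units.val_mul, ← Prod.fst_mul, inv_mul_cancel, Prod.fst_one, Units.val_one]

lemma normCond_inv {p : (Matrix (Fin 2) (Fin 2) E₂)ˣ × E₄ˣ}
    (hp : normCond F E₂ E₄ p) : normCond F E₂ E₄ p⁻¹ := by
  unfold normCond at *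
  have h2 : Algebra.norm F (p.1.val.det) * Algebra.norm F ((p⁻¹).1.val.det) = 1 := by
    rw [← _root_.map_mul, ← Matrix.det_mul, fst_val_mul_inv, Matrix.det_one, _root_.map_one]
  have h3 : Algebra.norm F p.2.val * Algebra.norm F ((p⁻¹).2.val) = 1 := by
    rw [← _root_.map_mul, ← Units.val_mul, ← Prod.snd_mul, mul_inv_cancel, Prod.snd_one,
      Units.val_one, _root_.map_one]
  calc Algebra.norm F ((p⁻¹).1.val.det) * Algebra.norm F ((p⁻¹).2.val)
      = (Algebra.norm F (p.1.val.det) * Algebra.norm F p.2.val) *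
        (Algebra.norm F ((p⁻¹).1.val.det) * Algebra.norm F ((p⁻¹).2.val)) := by
        rw [hp, one_mul]
    _ = (Algebra.norm F (p.1.val.det) * Algebra.norm F ((p⁻¹).1.val.det)) *
        (Algebra.norm F p.2.val * Algebra.norm F ((p⁻¹).2.val)) := by ring
    _ = 1 := by rw [h2, h3, mul_one]

lemma diagP_one : diagP E₂ E₄ 1 := by
  constructor <;> simp [diagP, Matrix.one_apply]

lemma diagP_mul {p q : (Matrix (Fin 2) (Fin 2) E₂)ˣ × E₄ˣ}
    (hp : diagP E₂ E₄ p) (hq : diagP E₂ E₄ q) : diagP E₂ E₄ (p * q) := by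
  obtain ⟨h1, h2⟩ := hp; obtain ⟨h3, h4⟩ := hq
  unfold diagP at *
  constructor <;>
    simp [Prod.fst_mul, Units.val_mul, Matrix.mul_apply, Fin.sum_univ_two, h1, h2, h3, h4]

lemma antidiagP_mul_antidiagP {p q : (Matrix (Fin 2) (Fin 2) E₂)ˣ × E₄ˣ}
    (hp : antidiagP E₂ E₄ p) (hq : antidiagP E₂ E₄ q) : diagP E₂ E₄ (p * q) := by
  obtain ⟨h1, h2⟩ := hp; obtain ⟨h3, h4⟩ := hq
  unfold diagP
  constructor <;>
    simp [Prod.fst_mul, Units.val_mul, Matrix.mul_apply, Fin.sum_univ_two, h1, h2, h3, h4]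

lemma diagP_mul_antidiagP {p q : (Matrix (Fin 2) (Fin 2) E₂)ˣ × E₄ˣ}
    (hp : diagP E₂ E₄ p) (hq : antidiagP E₂ E₄ q) : antidiagP E₂ E₄ (p * q) := by
  obtain ⟨h1, h2⟩ := hp; obtain ⟨h3, h4⟩ := hq
  unfold antidiagP
  constructor <;>
    simp [Prod.fst_mul, Units.val_mul, Matrix.mul_apply, Fin.sum_univ_two, h1, h2, h3, h4]

lemma antidiagP_mul_diagP {p q : (Matrix (Fin 2) (Fin 2) E₂)ˣ × E₄ˣ}
    (hp : antidiagP E₂ E₄ p) (hq : diagP E₂ E₄ q) : antidiagP E₂ E₄ (p * q) := by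
  obtain ⟨h1, h2⟩ := hp; obtain ⟨h3, h4⟩ := hq
  unfold antidiagP
  constructor <;>
    simp [Prod.fst_mul, Units.val_mul, Matrix.mul_apply, Fin.sum_univ_two, h1, h2, h3, h4]

lemma one_matrix_apply_01 : (1 : Matrix (Fin 2) (Fin 2) E₂) 0 1 = 0 := by simp
lemma one_matrix_apply_10 : (1 : Matrix (Fin 2) (Fin 2) E₂) 1 0 = 0 := by simp
lemma one_matrix_apply_00 : (1 : Matrix (Fin 2) (Fin 2) E₂) 0 0 = 1 := by simp
lemma one_matrix_apply_11 : (1 : Matrix (Fin 2) (Fin 2) E₂) 1 1 = 1 := by simp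

lemma diagP_inv {p : (Matrix (Fin 2) (Fin 2) E₂)ˣ × E₄ˣ}
    (hp : diagP E₂ E₄ p) : diagP E₂ E₄ p⁻¹ := by
  obtain ⟨h1, h2⟩ := hp
  have hPQ := fst_val_mul_inv p
  have hQP := fst_val_inv_mul p
  have e00 : p.1.val 0 0 * (p⁻¹).1.val 0 0 = 1 := by
    have h := congrFun (congrFun hPQ 0) 0
    rwa [Matrix.mul_apply, Fin.sum_univ_two, h1, zero_mul, add_zero,
      one_matrix_apply_00] at h
  have e11 : p.1.val 1 1 * (p⁻¹).1.val 1 1 = 1 := by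
    have h := congrFun (congrFun hPQ 1) 1
    rwa [Matrix.mul_apply, Fin.sum_univ_two, h2, zero_mul, zero_add,
      one_matrix_apply_11] at h
  constructor
  · have h := congrFun (congrFun hQP 0) 1
    rw [Matrix.mul_apply, Fin.sum_univ_two, h1, mul_zero, zero_add,
      one_matrix_apply_01] at h
    rcases mul_eq_zero.1 h with h' | h'
    · exact h'
    · exact absurd h' (left_ne_zero_of_mul_eq_one e11)
  · have h := congrFun (congrFun hQP 1) 0
    rw [Matrix.mul_apply, Fin.sum_univ_two, h2, mul_zero, add_zero,
      one_matrix_apply_10] at h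
    rcases mul_eq_zero.1 h with h' | h'
    · exact h'
    · exact absurd h' (left_ne_zero_of_mul_eq_one e00)

lemma antidiagP_inv {p : (Matrix (Fin 2) (Fin 2) E₂)ˣ × E₄ˣ}
    (hp : antidiagP E₂ E₄ p) : antidiagP E₂ E₄ p⁻¹ := by
  obtain ⟨h1, h2⟩ := hp
  have hPQ := fst_val_mul_inv p
  have hQP := fst_val_inv_mul p
  have e01 : p.1.val 0 1 * (p⁻¹).1.val 1 0 = 1 := by
    have h := congrFun (congrFun hPQ 0) 0
    rwa [Matrix.mul_apply, Fin.sum_univ_two, h1, zero_mul, zero_add,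
      one_matrix_apply_00] at h
  have e10 : p.1.val 1 0 * (p⁻¹).1.val 0 1 = 1 := by
    have h := congrFun (congrFun hPQ 1) 1
    rwa [Matrix.mul_apply, Fin.sum_univ_two, h2, zero_mul, add_zero,
      one_matrix_apply_11] at h
  constructor
  · have h := congrFun (congrFun hQP 0) 1
    rw [Matrix.mul_apply, Fin.sum_univ_two, h2, mul_zero, add_zero,
      one_matrix_apply_01] at h
    rcases mul_eq_zero.1 h with h' | h'
    · exact h'
    · exact absurd h' (left_ne_zero_of_mul_eq_one e01)
  · have h := congrFun (congrFun hQP 1) 0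
    rw [Matrix.mul_apply, Fin.sum_univ_two, h1, mul_zero, zero_add,
      one_matrix_apply_10] at h
    rcases mul_eq_zero.1 h with h' | h'
    · exact h'
    · exact absurd h' (left_ne_zero_of_mul_eq_one e10)

end lemmas

/-- The Levi subgroup `M⁰` of `G⁰`, as a subgroup of `GL₂(E₂) × E₄ˣ`. -/
def Msub : Subgroup ((Matrix (Fin 2) (Fin 2) E₂)ˣ × E₄ˣ) where
  carrier := M0set F E₂ E₄
  one_mem' := ⟨normCond_one, diagP_one⟩
  mul_mem' := fun hp hq => ⟨normCond_mul hp.1 hq.1, diagP_mul hp.2 hq.2⟩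
  inv_mem' := fun hp => ⟨normCond_inv hp.1, diagP_inv hp.2⟩

/-- The normalizer `N = M⁰ ∪ s̃·M⁰` of `M⁰` in `G⁰`, as a subgroup of
`GL₂(E₂) × E₄ˣ`; concretely, it consists of the elements of `G⁰` whose matrix
component is diagonal or antidiagonal. -/
def Nsub : Subgroup ((Matrix (Fin 2) (Fin 2) E₂)ˣ × E₄ˣ) where
  carrier := {p | normCond F E₂ E₄ p ∧ (diagP E₂ E₄ p ∨ antidiagP E₂ E₄ p)}
  one_mem' := ⟨normCond_one, Or.inl diagP_one⟩
  mul_mem' := by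
    rintro p q ⟨hp1, hp2⟩ ⟨hq1, hq2⟩
    refine ⟨normCond_mul hp1 hq1, ?_⟩
    rcases hp2 with hp2 | hp2 <;> rcases hq2 with hq2 | hq2
    · exact Or.inl (diagP_mul hp2 hq2)
    · exact Or.inr (diagP_mul_antidiagP hp2 hq2)
    · exact Or.inr (antidiagP_mul_diagP hp2 hq2)
    · exact Or.inl (antidiagP_mul_antidiagP hp2 hq2)
  inv_mem' := by
    rintro p ⟨hp1, hp2⟩
    exact ⟨normCond_inv hp1, hp2.elim (fun h => Or.inl (diagP_inv h))
      (fun h => Or.inr (antidiagP_inv h))⟩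

end Setup

section Aux

/-- STATEMENT 12 auxiliary: `K⁰_{M⁰}`, the subgroup of `K_{M⁰}` of elements
`(diag(x,y),z)` whose residues satisfy `(xy mod 𝔭_{E₂})·(z mod 𝔭_{E₄})² = 1`,
expressed as: there is `k : ℤ` with `xy·ζ^{-k} ∈ 1 + 𝔭_{E₂}` and
`z²·ζ^{k} ∈ 1 + 𝔭_{E₄}`. Here `ζF` denotes the image of `ζ` in `F`. -/
def KM0zeroSet (F : Type) [Field F] (O : ValuationSubring F)
    (E₂ E₄ : Type) [Field E₂] [Algebra F E₂] [Field E₄] [Algebra F E₄] (ζF : F) :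
    Set ((Matrix (Fin 2) (Fin 2) E₂)ˣ × E₄ˣ) :=
  {p | p ∈ KM0set F O E₂ E₄ ∧ ∃ k : ℤ,
    InMaxIC F O E₂ (p.1.val 0 0 * p.1.val 1 1 * (algebraMap F E₂ ζF) ^ (-k) - 1) ∧
    InMaxIC F O E₄ (p.2.val ^ 2 * (algebraMap F E₄ ζF) ^ k - 1)}

end Aux

open Polynomial in
theorem Algebra.norm_eq_of_pow_eq_of_adjoin_eq_top {F E : Type*} [Field F] [Field E]
    [Algebra F E] {n : ℕ} (hn : 0 < n) (hrank : Module.finrank F E = n) {x : E} {c : F}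
    (hx : x ^ n = algebraMap F E (-c)) (hgen : Algebra.adjoin F {x} = ⊤) :
    Algebra.norm F x = (-1) ^ n * c := by
  have : Module.Finite F E := Module.finite_of_finrank_pos (hrank ▸ hn)
  have hint : IsIntegral F x := Algebra.IsIntegral.isIntegral x
  have hdeg : (minpoly F x).natDegree = n := by
    rw [← PowerBasis.ofAdjoinEqTop_dim hint hgen, ← PowerBasis.finrank, hrank]
  have hminpoly : minpoly F x = X ^ n + C c :=
    (minpoly.unique_of_degree_le_degree_minpoly F x (monic_X_pow_add_C c hn.ne')
      (by simp [hx]) (by rw [degree_X_pow_add_C hn,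
        degree_eq_natDegree (minpoly.ne_zero hint), hdeg])).symm
  rw [← PowerBasis.ofAdjoinEqTop_gen hint hgen,
    Algebra.PowerBasis.norm_gen_eq_coeff_zero_minpoly, PowerBasis.ofAdjoinEqTop_gen,
    PowerBasis.ofAdjoinEqTop_dim, hdeg, hminpoly]
  simp [coeff_X_pow, hn.ne]

theorem etaExt_pow {F : Type} [Field F] (η : Fˣ →* ℂˣ) (x : F) (n : ℕ) :
    etaExt η (x ^ n) = etaExt η x ^ n := by
  rcases eq_or_ne x 0 with rfl | hx
  · cases n <;> simp [etaExt]
  · have hmk : Units.mk0 (x ^ n) (pow_ne_zero n hx) = Units.mk0 x hx ^ n := by ext; simp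
    simp only [etaExt, dif_neg hx, dif_neg (pow_ne_zero n hx), hmk, map_pow,
      Units.val_pow_eq_pow_val]

open scoped commutatorElement

theorem not_exists_extension_of_commutatorElement_mem {G A : Type*} [Group G] [CommMonoid A]
    (H : Subgroup G) (K : Set G) (χ : G → A) {s m : G} (hs : s ∈ H) (hm : m ∈ H)
    (hK : ⁅s, m⁆ ∈ K) (hχ : χ ⁅s, m⁆ ≠ 1) :
    ¬ ∃ ρ : H →* Aˣ, ∀ n : H, n.val ∈ K → (ρ n : A) = χ n.val := by
  rintro ⟨ρ, hρ⟩
  have h := hρ ⁅(⟨s, hs⟩ : H), ⟨m, hm⟩⁆ hK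
  rw [map_commutatorElement, commutatorElement_eq_one_iff_commute.mpr (Commute.all _ _),
    Units.val_one] at h
  exact hχ h.symm

def Matrix.diagonalUnits (n R : Type*) [Fintype n] [DecidableEq n] [Semiring R] :
    (n → Rˣ) →* (Matrix n n R)ˣ :=
  (Units.map (diagonalRingHom n R).toMonoidHom).comp MulEquiv.piUnits.symm.toMonoidHom

@[simp]
theorem Matrix.val_diagonalUnits {n R : Type*} [Fintype n] [DecidableEq n] [Semiring R]
    (d : n → Rˣ) : (diagonalUnits n R d : Matrix n n R) = diagonal fun i => (d i : R) :=
  rfl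

section Normalizer

variable {F : Type} [Field F] {O : ValuationSubring F}
  {E₂ E₄ : Type} [Field E₂] [Algebra F E₂] [Field E₄] [Algebra F E₄]

theorem isUnitOfIC_unitsMap {E : Type} [Field E] [Algebra F E] (u : (↥O)ˣ) :
    IsUnitOfIC F O E (Units.map (algebraMap ↥O E).toMonoidHom u : E) := by
  refine ⟨Units.ne_zero _, (integralClosure ↥O E).algebraMap_mem (u : ↥O), ?_⟩
  rw [← Units.val_inv_eq_inv_val, ← map_inv, Units.coe_map]
  exact (integralClosure ↥O E).algebraMap_mem _

theorem IsUnitOfIC.inv {E : Type} [Field E] [Algebra F E] {x : E} (hx : IsUnitOfIC F O E x) :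
    IsUnitOfIC F O E x⁻¹ :=
  ⟨inv_ne_zero hx.1, hx.2.2, by rw [inv_inv]; exact hx.2.1⟩

theorem sElt_mem_Nsub : sElt E₂ E₄ ∈ Nsub F E₂ E₄ :=
  ⟨by simp [normCond, sElt, sUnit, det_fin_two_of],
    Or.inr (by simp [antidiagP, sElt, sUnit])⟩

theorem coe_Nsub_eq_union : (Nsub F E₂ E₄ : Set ((Matrix (Fin 2) (Fin 2) E₂)ˣ × E₄ˣ)) =
    M0set F E₂ E₄ ∪ (fun m => sElt E₂ E₄ * m) '' M0set F E₂ E₄ := by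
  have hsN : normCond F E₂ E₄ (sElt E₂ E₄) := sElt_mem_Nsub.1
  have hsA : antidiagP E₂ E₄ (sElt E₂ E₄) := by simp [antidiagP, sElt, sUnit]
  ext p
  constructor
  · rintro ⟨hN, hD | hA⟩
    · exact Or.inl ⟨hN, hD⟩
    · refine Or.inr ⟨(sElt E₂ E₄)⁻¹ * p, ⟨normCond_mul (normCond_inv hsN) hN,
        antidiagP_mul_antidiagP (antidiagP_inv hsA) hA⟩, mul_inv_cancel_left _ _⟩
  · rintro (⟨hN, hD⟩ | ⟨x, ⟨hN, hD⟩, rfl⟩)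
    · exact ⟨hN, Or.inl hD⟩
    · exact ⟨normCond_mul hsN hN, Or.inr (antidiagP_mul_diagP hsA hD)⟩

theorem diagonalUnits_mem_M0set {d : Fin 2 → E₂ˣ} {z : E₄ˣ}
    (h : Algebra.norm F (d 0 * d 1 : E₂) * Algebra.norm F (z : E₄) = 1) :
    (diagonalUnits (Fin 2) E₂ d, z) ∈ M0set F E₂ E₄ :=
  ⟨by simpa [normCond, det_diagonal] using h, by simp [diagP]⟩

theorem diagonalUnits_inv_mem_KM0set {u : E₂ˣ} (hu : IsUnitOfIC F O E₂ u) :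
    (diagonalUnits (Fin 2) E₂ ![u⁻¹, u], (1 : E₄ˣ)) ∈ KM0set F O E₂ E₄ :=
  ⟨diagonalUnits_mem_M0set (by simp), by simpa using hu.inv, by simpa using hu,
    ⟨one_ne_zero, by simp⟩⟩

theorem sUnit_mul_diagonalUnits_mul_inv (d : Fin 2 → E₂ˣ) :
    sUnit E₂ * diagonalUnits (Fin 2) E₂ d * (sUnit E₂)⁻¹ =
      diagonalUnits (Fin 2) E₂ ![d 1, d 0] := by
  ext i j
  fin_cases i <;> fin_cases j <;> simp [sUnit, mul_apply, Fin.sum_univ_two, vecMul_diagonal]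

theorem commutatorElement_sElt_diagonalUnits (d : Fin 2 → E₂ˣ) (z : E₄ˣ) :
    ⁅sElt E₂ E₄, (diagonalUnits (Fin 2) E₂ d, z)⁆ =
      (diagonalUnits (Fin 2) E₂ ![d 1 / d 0, d 0 / d 1], 1) := by
  refine Prod.ext ?_ (by simp [commutatorElement_def, sElt])
  have hdiv : ![d 1 / d 0, d 0 / d 1] = ![d 1, d 0] * d⁻¹ := by
    ext i; fin_cases i <;> simp [div_eq_mul_inv]
  rw [hdiv, map_mul, map_inv, ← sUnit_mul_diagonalUnits_mul_inv]
  rfl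

theorem exists_mem_M0set_commutatorElement_eq (hrank2 : Module.finrank F E₂ = 2)
    {u t : E₂ˣ} {w : E₄ˣ} {c : F} (hut : (u : E₂) * t * t = algebraMap F E₂ (-c))
    (hw : Algebra.norm F (w : E₄) = c) :
    ∃ m ∈ M0set F E₂ E₄,
      ⁅sElt E₂ E₄, m⁆ = (diagonalUnits (Fin 2) E₂ ![u⁻¹, u], 1) := by
  have hc : c ≠ 0 := hw ▸ (w.isUnit.map (Algebra.norm F)).ne_zero
  refine ⟨(diagonalUnits (Fin 2) E₂ ![u * t, t], w⁻¹ ^ 2), diagonalUnits_mem_M0set ?_, ?_⟩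
  · simp only [Matrix.cons_val_zero, Matrix.cons_val_one, Units.val_mul, hut,
      Algebra.norm_algebraMap, hrank2, Units.val_pow_eq_pow_val, map_pow, map_units_inv, hw]
    field_simp
  · simp [commutatorElement_sElt_diagonalUnits]

end Normalizer

theorem stmt15_general
    (F : Type) [Field F] (O : ValuationSubring F)
    (ϖ : ↥O) (hϖ : Irreducible ϖ)
    (ζ : (↥O)ˣ)
    (E₂ : Type) [Field E₂] [Algebra F E₂]
    (hrank2 : Module.finrank F E₂ = 2)
    (ϖ₂ : E₂) (hϖ₂ : ϖ₂ ^ 2 = algebraMap F E₂ (-(ϖ : F)))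
    (E₄ : Type) [Field E₄] [Algebra F E₄]
    (hrank4 : Module.finrank F E₄ = 4)
    (ϖ₄ : E₄) (hϖ₄ : ϖ₄ ^ 4 = algebraMap F E₄ (-(((ζ : ↥O) : F) * (ϖ : F))))
    (hgen4 : Algebra.adjoin F {ϖ₄} = ⊤)
    (i : ℂ) (hi : i ^ 2 = -1)
    (η : Fˣ →* ℂˣ)
    (hηζ : etaExt η (((ζ : ↥O) : F)) = i) :
    ((Nsub F E₂ E₄ : Set ((Matrix (Fin 2) (Fin 2) E₂)ˣ × E₄ˣ)) =
      M0set F E₂ E₄ ∪ (fun m => sElt E₂ E₄ * m) '' M0set F E₂ E₄) ∧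
    ¬ ∃ ρd : ↥(Nsub F E₂ E₄) →* ℂˣ,
        ∀ n : ↥(Nsub F E₂ E₄), n.val ∈ KM0set F O E₂ E₄ →
          (ρd n : ℂ) = etaExt η (Algebra.norm F (n.val.1.val 1 1)) := by
  set c : F := (ζ : ↥O) * (ϖ : F)
  have hc : c ≠ 0 := mul_ne_zero (by simp) (by simpa using hϖ.ne_zero)
  have hϖ₂0 : ϖ₂ ≠ 0 := by
    rintro rfl
    exact hϖ.ne_zero (by simpa using hϖ₂)
  have hϖ₄0 : ϖ₄ ≠ 0 := by
    rintro rfl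
    exact hc (by simpa [c] using hϖ₄)
  have hnorm₄ : Algebra.norm F ϖ₄ = c := by
    rw [Algebra.norm_eq_of_pow_eq_of_adjoin_eq_top (by norm_num) hrank4 hϖ₄ hgen4]
    norm_num
  let u : E₂ˣ := Units.map (algebraMap ↥O E₂).toMonoidHom ζ
  have hdet : (u : E₂) * ϖ₂ * ϖ₂ = algebraMap F E₂ (-c) := by
    show algebraMap F E₂ ((ζ : ↥O) : F) * ϖ₂ * ϖ₂ = _
    rw [mul_assoc, ← sq, hϖ₂, ← map_mul, mul_neg]
  obtain ⟨m, hm, hcomm⟩ := exists_mem_M0set_commutatorElement_eq (E₄ := E₄) hrank2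
    (t := Units.mk0 ϖ₂ hϖ₂0) (w := Units.mk0 ϖ₄ hϖ₄0) hdet hnorm₄
  refine ⟨coe_Nsub_eq_union, not_exists_extension_of_commutatorElement_mem _ _
    (fun g => etaExt η (Algebra.norm F (g.1.val 1 1))) sElt_mem_Nsub ⟨hm.1, Or.inl hm.2⟩
    (hcomm ▸ diagonalUnits_inv_mem_KM0set (isUnitOfIC_unitsMap ζ)) ?_⟩
  rw [hcomm]
  show etaExt η (Algebra.norm F (algebraMap F E₂ ((ζ : ↥O) : F))) ≠ 1
  rw [Algebra.norm_algebraMap, hrank2, etaExt_pow, hηζ, hi]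
  norm_num

theorem stmt15
    (F : Type) [Field F] (O : ValuationSubring F) [IsDiscreteValuationRing ↥O]
    (hcomplete : IsAdicComplete (IsLocalRing.maximalIdeal ↥O) ↥O)
    (q : ℕ) [Finite (IsLocalRing.ResidueField ↥O)]
    (hq : Nat.card (IsLocalRing.ResidueField ↥O) = q)
    (hqodd : Odd q) (hq4 : 4 ∣ q - 1)
    (ϖ : ↥O) (hϖ : Irreducible ϖ)
    (ζ : (↥O)ˣ) (hζ : orderOf ζ = q - 1)
    (E₂ : Type) [Field E₂] [Algebra F E₂] [FiniteDimensional F E₂]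
    (hrank2 : Module.finrank F E₂ = 2)
    (ϖ₂ : E₂) (hϖ₂ : ϖ₂ ^ 2 = algebraMap F E₂ (-(ϖ : F)))
    (hgen2 : Algebra.adjoin F {ϖ₂} = ⊤)
    (E₄ : Type) [Field E₄] [Algebra F E₄] [FiniteDimensional F E₄]
    (hrank4 : Module.finrank F E₄ = 4)
    (ϖ₄ : E₄) (hϖ₄ : ϖ₄ ^ 4 = algebraMap F E₄ (-(((ζ : ↥O) : F) * (ϖ : F))))
    (hgen4 : Algebra.adjoin F {ϖ₄} = ⊤)
    (i : ℂ) (hi : i ^ 2 = -1)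
    (η : Fˣ →* ℂˣ)
    (hηϖ : etaExt η ((ϖ : F)) = 1)
    (hη1 : ∀ m : ↥O, m ∈ IsLocalRing.maximalIdeal ↥O → etaExt η (((1 + m : ↥O) : F)) = 1)
    (hηζ : etaExt η (((ζ : ↥O) : F)) = i) :
    ((Nsub F E₂ E₄ : Set ((Matrix (Fin 2) (Fin 2) E₂)ˣ × E₄ˣ)) =
      M0set F E₂ E₄ ∪ (fun m => sElt E₂ E₄ * m) '' M0set F E₂ E₄) ∧
    ¬ ∃ ρd : ↥(Nsub F E₂ E₄) →* ℂˣ,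
        ∀ n : ↥(Nsub F E₂ E₄), n.val ∈ KM0set F O E₂ E₄ →
          (ρd n : ℂ) = etaExt η (Algebra.norm F (n.val.1.val 1 1)) :=
  stmt15_general F O ϖ hϖ ζ E₂ hrank2 ϖ₂ hϖ₂ E₄ hrank4 ϖ₄ hϖ₄ hgen4 i hi η hηζ
end
end

section
/- The group homomorphism u ↦ η(N_{E₂/F}(u)) on O_{E₂}^× is trivial on the subgroup 1 + 𝔭_{E₂} but is not the trivial homomorphism on O_{E₂}^×; consequently, it descends to a nontrivial character χ of the finite group O_{E₂}^×/(1 + 𝔭_{E₂}), and the sum of χ(x) over all x ∈ O_{E₂}^×/(1 + 𝔭_{E₂}) equals 0. -/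
open Matrix
open scoped Classical

noncomputable section

/-! Write `x = a + b • ϖ₂` with `a b : F`. Its trace is `2a` and its norm `a² + ϖ b²`; since `2`
is a unit and `ϖ` is irreducible, `x` is integral iff `a, b ∈ O`, a unit of `O_{E₂}` iff moreover
`a` is a unit, and in `𝔭_{E₂}` iff moreover `a ∈ 𝔭_F`. Hence `N(1 + 𝔭_{E₂}) ⊆ 1 + 𝔭_F`, where `η`
is trivial, and `a + b • ϖ₂ ↦ a mod 𝔭_F` identifies `O_{E₂}ˣ / (1 + 𝔭_{E₂})` with `kˣ`, with the
powers of `ζ` as representatives: reduction is injective on `(q - 1)`-th roots of unity because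
`q - 1` is invertible in `k`. Finally `η (N ζ^j) = η(ζ)^(2j) = (-1)^j` and `q - 1` is even. -/

open Module IsLocalRing

section LocalRing

variable {R : Type*} [CommRing R] [IsLocalRing R]

theorem IsLocalRing.eq_one_of_pow_eq_one_of_residue_eq_one {x : R} {n : ℕ} (hxn : x ^ n = 1)
    (hn : (n : ResidueField R) ≠ 0) (hx : residue R x = 1) : x = 1 := by
  have hgeom : IsUnit (∑ i ∈ Finset.range n, x ^ i) := by
    rw [← residue_ne_zero_iff_isUnit, map_sum]
    simpa [hx] using hn
  rw [← sub_eq_zero, ← hgeom.mul_right_eq_zero, geom_sum_mul, hxn, sub_self]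

theorem IsLocalRing.cast_card_sub_one_ne_zero [Finite (ResidueField R)] :
    ((Nat.card (ResidueField R) - 1 : ℕ) : ResidueField R) ≠ 0 := by
  have := Fintype.ofFinite (ResidueField R)
  rw [Nat.cast_sub Nat.card_pos, Nat.card_eq_fintype_card, Nat.cast_card_eq_zero]
  simp

theorem IsLocalRing.existsUnique_residue_pow_eq [Finite (ResidueField R)] {ζ : Rˣ}
    (hζ : orderOf ζ = Nat.card (ResidueField R) - 1) (a : Rˣ) :
    ∃! j : Fin (orderOf ζ), residue R ↑(ζ ^ (j : ℕ)) = residue R a := by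
  let r : Rˣ →* (ResidueField R)ˣ := Units.map (residue R : R →* ResidueField R)
  let f (j : Fin (orderOf ζ)) : (ResidueField R)ˣ := r (ζ ^ (j : ℕ))
  have hf : Function.Injective f := by
    intro j k hjk
    have hroot : (ζ ^ (j : ℕ) * (ζ ^ (k : ℕ))⁻¹) ^ orderOf ζ = 1 := by
      rw [mul_pow, inv_pow, pow_right_comm ζ (j : ℕ), pow_right_comm ζ (k : ℕ),
        pow_orderOf_eq_one, one_pow, one_pow, inv_one, mul_one]
    have hres : r (ζ ^ (j : ℕ) * (ζ ^ (k : ℕ))⁻¹) = 1 := by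
      rw [map_mul, map_inv]
      exact mul_inv_eq_one.2 hjk
    have := eq_one_of_pow_eq_one_of_residue_eq_one (congrArg Units.val hroot)
      (hζ ▸ cast_card_sub_one_ne_zero) (congrArg Units.val hres)
    exact Fin.ext (pow_injOn_Iio_orderOf j.2 k.2 (mul_inv_eq_one.1 (Units.ext this)))
  have hbij : Function.Bijective f := hf.bijective_of_nat_card_le (by
    rw [Nat.card_units, Nat.card_fin, hζ])
  refine (hbij.existsUnique (r a)).imp fun j => ?_
  simp [f, r, Units.ext_iff]

theorem IsLocalRing.isUnit_two_of_odd_card [Finite (ResidueField R)]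
    (hodd : Odd (Nat.card (ResidueField R))) : IsUnit (2 : R) := by
  have := Fintype.ofFinite (ResidueField R)
  rw [← residue_ne_zero_iff_isUnit, map_ofNat]
  refine Ring.two_ne_zero fun h => ?_
  rw [Nat.card_eq_fintype_card, Nat.odd_iff] at hodd
  have := FiniteField.even_card_of_char_two h
  omega

end LocalRing

section QuadraticCoordinates

variable {F E : Type*} [Field F] [Field E] [Algebra F E] {π : E}

theorem notMem_bot_of_adjoin_eq_top (h2 : finrank F E = 2) (hπ : Algebra.adjoin F {π} = ⊤) :
    π ∉ (⊥ : Subalgebra F E) := by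
  intro h
  have : (⊥ : Subalgebra F E) = ⊤ :=
    le_antisymm bot_le (hπ ▸ Algebra.adjoin_le (Set.singleton_subset_iff.2 h))
  have := Subalgebra.bot_eq_top_iff_finrank_eq_one.1 this
  omega

theorem linearIndependent_one_of_adjoin_eq_top (h2 : finrank F E = 2)
    (hπ : Algebra.adjoin F {π} = ⊤) : LinearIndependent F ![1, π] := by
  have hπF := notMem_bot_of_adjoin_eq_top h2 hπ
  refine linearIndependent_fin2.2 ⟨fun h => hπF ?_, fun a h => hπF ?_⟩
  · simp only [Matrix.cons_val_one, Matrix.cons_val_zero] at h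
    exact h ▸ Subalgebra.zero_mem _
  simp only [Matrix.cons_val_one, Matrix.cons_val_zero] at h
  have ha : a ≠ 0 := by rintro rfl; simp at h
  rw [← inv_smul_smul₀ ha π, h]
  exact Subalgebra.smul_mem _ (Subalgebra.one_mem _) _

def basisOneGen (h2 : finrank F E = 2) (hπ : Algebra.adjoin F {π} = ⊤) : Basis (Fin 2) F E :=
  basisOfLinearIndependentOfCardEqFinrank (linearIndependent_one_of_adjoin_eq_top h2 hπ)
    (by simp [h2])

theorem basisOneGen_apply (h2 : finrank F E = 2) (hπ : Algebra.adjoin F {π} = ⊤) :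
    ⇑(basisOneGen h2 hπ) = ![1, π] := by
  simp [basisOneGen]

theorem basisOneGen_repr (h2 : finrank F E = 2) (hπ : Algebra.adjoin F {π} = ⊤) (a b : F)
    (i : Fin 2) :
    (basisOneGen h2 hπ).repr (algebraMap F E a + b • π) i = ![a, b] i := by
  have : algebraMap F E a + b • π = ∑ j, ![a, b] j • basisOneGen h2 hπ j := by
    simp [basisOneGen_apply, Fin.sum_univ_two, Algebra.algebraMap_eq_smul_one]
  rw [this, Module.Basis.repr_sum_self]

theorem exists_eq_algebraMap_add_smul (h2 : finrank F E = 2) (hπ : Algebra.adjoin F {π} = ⊤)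
    (x : E) : ∃ a b : F, x = algebraMap F E a + b • π := by
  refine ⟨(basisOneGen h2 hπ).repr x 0, (basisOneGen h2 hπ).repr x 1, ?_⟩
  conv_lhs => rw [← (basisOneGen h2 hπ).sum_repr x]
  simp [basisOneGen_apply, Fin.sum_univ_two, Algebra.algebraMap_eq_smul_one]

theorem algebraMap_add_smul_mul {w : F} (hw : π ^ 2 = algebraMap F E (-w)) (a b c d : F) :
    (algebraMap F E a + b • π) * (algebraMap F E c + d • π) =
      algebraMap F E (a * c - w * b * d) + (a * d + b * c) • π := by
  simp only [Algebra.smul_def, map_add, map_sub, map_mul, map_neg] at hw ⊢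
  linear_combination (algebraMap F E b * algebraMap F E d) * hw

theorem leftMulMatrix_basisOneGen (h2 : finrank F E = 2) (hπ : Algebra.adjoin F {π} = ⊤)
    {w : F} (hw : π ^ 2 = algebraMap F E (-w)) (a b : F) :
    Algebra.leftMulMatrix (basisOneGen h2 hπ) (algebraMap F E a + b • π) =
      !![a, -(w * b); b, a] := by
  have hmulπ : (algebraMap F E a + b • π) * π = algebraMap F E (-(w * b)) + a • π := by
    simpa [neg_mul] using algebraMap_add_smul_mul hw a b 0 1
  ext i j
  rw [Algebra.leftMulMatrix_eq_repr_mul, basisOneGen_apply]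
  fin_cases j <;>
    simp only [Fin.zero_eta, Fin.mk_one, Matrix.cons_val_zero, Matrix.cons_val_one, mul_one,
      hmulπ, basisOneGen_repr] <;>
    fin_cases i <;> rfl

theorem norm_algebraMap_add_smul (h2 : finrank F E = 2) (hπ : Algebra.adjoin F {π} = ⊤)
    {w : F} (hw : π ^ 2 = algebraMap F E (-w)) (a b : F) :
    Algebra.norm F (algebraMap F E a + b • π) = a ^ 2 + w * b ^ 2 := by
  rw [Algebra.norm_eq_matrix_det (basisOneGen h2 hπ), leftMulMatrix_basisOneGen h2 hπ hw,
    Matrix.det_fin_two_of]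
  ring

theorem trace_algebraMap_add_smul (h2 : finrank F E = 2) (hπ : Algebra.adjoin F {π} = ⊤)
    {w : F} (hw : π ^ 2 = algebraMap F E (-w)) (a b : F) :
    Algebra.trace F E (algebraMap F E a + b • π) = 2 * a := by
  rw [Algebra.trace_eq_matrix_trace (basisOneGen h2 hπ), leftMulMatrix_basisOneGen h2 hπ hw,
    Matrix.trace_fin_two_of]
  ring

end QuadraticCoordinates

theorem Finset.existsUnique_mem_image_univ {α β : Type*} [Fintype α] [DecidableEq β]
    {f : α → β} {p : β → Prop} (h : ∃! a, p (f a)) : ∃! b, b ∈ Finset.univ.image f ∧ p b := by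
  obtain ⟨a, ha, huniq⟩ := h
  refine ⟨f a, ⟨Finset.mem_image_of_mem f (Finset.mem_univ a), ha⟩, ?_⟩
  rintro _ ⟨hb, hpb⟩
  obtain ⟨a', -, rfl⟩ := Finset.mem_image.1 hb
  rw [huniq a' hpb]

theorem etaExt_eq_ofUnitHom {F : Type} [Field F] (η : Fˣ →* ℂˣ) :
    etaExt η = MulChar.ofUnitHom η := by
  funext x
  by_cases hx : x = 0
  · rw [etaExt, dif_pos hx, hx, MulChar.map_zero]
  · rw [etaExt, dif_neg hx, ← MulChar.ofUnitHom_coe, Units.val_mk0]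

namespace ValuationSubring

variable {F : Type} [Field F] (O : ValuationSubring F)

instance valAlg_isScalarTower (E : Type) [Field E] [Algebra F E] : IsScalarTower O F E :=
  IsScalarTower.of_algebraMap_eq fun _ => rfl

theorem isIntegral_iff_mem {a : F} : IsIntegral O a ↔ a ∈ O := by
  -- the instance found here is `valAlg F O F`: defeq to, but not syntactically, the subring
  -- algebra for which `IsFractionRing O F` is known
  let : Algebra O F := O.instAlgebraSubtypeMem
  have h := IsIntegrallyClosed.isIntegral_iff (R := O) (K := F) (x := a)
  exact h.trans ⟨fun ⟨y, hy⟩ => hy ▸ y.2, fun h => ⟨⟨a, h⟩, rfl⟩⟩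

theorem mem_of_mul_sq_mem {ϖ : O} (hϖ : Irreducible ϖ) {b : F} (h : (ϖ : F) * b ^ 2 ∈ O) :
    b ∈ O := by
  by_contra hb
  have hb0 : b ≠ 0 := by rintro rfl; exact hb O.zero_mem
  let d : O := ⟨b⁻¹, (O.mem_or_inv_mem b).resolve_left hb⟩
  have hd : ¬IsUnit d := fun hd => hb <| (O.valuation_le_one_iff b).1 <|
    (by simpa [d] using (O.valuation_eq_one_iff d).1 hd : O.valuation b = 1).le
  have hϖd : ϖ = ⟨(ϖ : F) * b ^ 2, h⟩ * d * d := by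
    ext
    change (ϖ : F) = (ϖ : F) * b ^ 2 * b⁻¹ * b⁻¹
    field_simp
  rcases hϖ.isUnit_or_isUnit hϖd with h' | h'
  · exact hd (isUnit_of_mul_isUnit_right h')
  · exact hd h'

end ValuationSubring

section RamifiedQuadratic

open ValuationSubring

variable {F : Type} [Field F] {O : ValuationSubring F} {E : Type} [Field E] [Algebra F E]
  {π : E} {ϖ : O}

theorem ValuationSubring.valuation_lt_one_of_irreducible (hϖ : Irreducible ϖ) :
    O.valuation ϖ < 1 :=
  (O.valuation_lt_one_iff ϖ).1 hϖ.not_isUnit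

theorem ValuationSubring.valuation_sq_add_mul_sq_eq_one_iff (hϖ : O.valuation ϖ < 1) {a b : F}
    (ha : a ∈ O) (hb : b ∈ O) : O.valuation (a ^ 2 + ϖ * b ^ 2) = 1 ↔ O.valuation a = 1 := by
  have hϖb : O.valuation (ϖ * b ^ 2) < 1 := by
    rw [map_mul, map_pow]
    exact mul_lt_one_of_nonneg_of_lt_one_left zero_le hϖ
      (pow_le_one₀ zero_le ((O.valuation_le_one_iff b).2 hb))
  constructor
  · intro h
    by_contra ha1
    have ha1 : O.valuation a < 1 := lt_of_le_of_ne ((O.valuation_le_one_iff a).2 ha) ha1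
    refine (O.valuation.map_add_lt (g := 1) ?_ hϖb).ne h
    rw [map_pow]
    exact pow_lt_one₀ zero_le ha1 two_ne_zero
  · intro h
    rw [O.valuation.map_add_eq_of_lt_left, map_pow, h, one_pow]
    rwa [map_pow, h, one_pow]

theorem isIntegral_algebraMap_add_smul_iff (h2 : finrank F E = 2) (hπ : Algebra.adjoin F {π} = ⊤)
    (hϖ : Irreducible ϖ) (hπϖ : π ^ 2 = algebraMap F E (-(ϖ : F))) (htwo : O.valuation 2 = 1)
    {a b : F} : IsIntegral O (algebraMap F E a + b • π) ↔ a ∈ O ∧ b ∈ O := by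
  have : FiniteDimensional F E := Module.finite_of_finrank_eq_succ h2
  constructor
  · intro hx
    have htr := Algebra.isIntegral_trace (R := O) (L := F) hx
    rw [trace_algebraMap_add_smul h2 hπ hπϖ, isIntegral_iff_mem, ← valuation_le_one_iff,
      map_mul, htwo, one_mul, valuation_le_one_iff] at htr
    have hn := Algebra.isIntegral_norm (R := O) F hx
    rw [norm_algebraMap_add_smul h2 hπ hπϖ, isIntegral_iff_mem] at hn
    refine ⟨htr, O.mem_of_mul_sq_mem hϖ ?_⟩
    simpa using O.sub_mem hn (O.pow_mem htr 2)
  · rintro ⟨ha, hb⟩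
    have hπint : IsIntegral O π := by
      refine IsIntegral.of_pow two_pos ?_
      rw [hπϖ]
      exact (isIntegral_iff_mem O |>.2 (O.neg_mem _ ϖ.2)).algebraMap
    rw [Algebra.smul_def]
    exact ((isIntegral_iff_mem O).2 ha).algebraMap.add
      (((isIntegral_iff_mem O).2 hb).algebraMap.mul hπint)

theorem isUnitOfIC_algebraMap_add_smul_iff (h2 : finrank F E = 2)
    (hπ : Algebra.adjoin F {π} = ⊤) (hϖ : Irreducible ϖ) (hπϖ : π ^ 2 = algebraMap F E (-(ϖ : F)))
    (htwo : O.valuation 2 = 1) {a b : F} :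
    IsUnitOfIC F O E (algebraMap F E a + b • π) ↔ O.valuation a = 1 ∧ b ∈ O := by
  have : FiniteDimensional F E := Module.finite_of_finrank_eq_succ h2
  have hint := isIntegral_algebraMap_add_smul_iff h2 hπ hϖ hπϖ htwo (a := a) (b := b)
  have hN := valuation_sq_add_mul_sq_eq_one_iff (valuation_lt_one_of_irreducible hϖ)
    (a := a) (b := b)
  rw [← norm_algebraMap_add_smul h2 hπ hπϖ] at hN
  set x := algebraMap F E a + b • π
  constructor
  · rintro ⟨hx0, hx, hxinv⟩
    obtain ⟨ha, hb⟩ := hint.1 hx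
    refine ⟨(hN ha hb).1 ?_, hb⟩
    have hNinv := Algebra.isIntegral_norm (R := O) F hxinv
    rw [isIntegral_iff_mem] at hNinv
    have hNx : Algebra.norm F x ∈ O := by
      rw [norm_algebraMap_add_smul h2 hπ hπϖ]
      exact add_mem (pow_mem ha 2) (mul_mem ϖ.2 (pow_mem hb 2))
    have hunit : IsUnit (⟨_, hNx⟩ : O) := IsUnit.of_mul_eq_one ⟨_, hNinv⟩ <| Subtype.ext <| by
      simp [← map_mul, mul_inv_cancel₀ hx0]
    exact (O.valuation_eq_one_iff _).1 hunit
  · rintro ⟨hva, hb⟩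
    have ha : a ∈ O := (O.valuation_le_one_iff a).1 hva.le
    have hvN := (hN ha hb).2 hva
    rw [norm_algebraMap_add_smul h2 hπ hπϖ] at hvN
    set N := a ^ 2 + ϖ * b ^ 2
    have hN0 : N ≠ 0 := by intro h; simp [h] at hvN
    have hxy : x * (algebraMap F E (a / N) + (-b / N) • π) = 1 := by
      rw [algebraMap_add_smul_mul hπϖ]
      rw [show a * (a / N) - ϖ * b * (-b / N) = 1 by field_simp; ring,
        show a * (-b / N) + b * (a / N) = 0 by ring, map_one, zero_smul, add_zero]
    refine ⟨left_ne_zero_of_mul_eq_one hxy, (mem_integralClosure_iff _ _).2 (hint.2 ⟨ha, hb⟩), ?_⟩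
    rw [inv_eq_of_mul_eq_one_right hxy, mem_integralClosure_iff,
      isIntegral_algebraMap_add_smul_iff h2 hπ hϖ hπϖ htwo, ← valuation_le_one_iff,
      ← valuation_le_one_iff]
    simp [hvN, hva, (O.valuation_le_one_iff b).2 hb]

theorem inMaxIC_algebraMap_add_smul_iff (h2 : finrank F E = 2)
    (hπ : Algebra.adjoin F {π} = ⊤) (hϖ : Irreducible ϖ) (hπϖ : π ^ 2 = algebraMap F E (-(ϖ : F)))
    (htwo : O.valuation 2 = 1) {a b : F} :
    InMaxIC F O E (algebraMap F E a + b • π) ↔ O.valuation a < 1 ∧ b ∈ O := by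
  rw [InMaxIC, mem_integralClosure_iff, isIntegral_algebraMap_add_smul_iff h2 hπ hϖ hπϖ htwo,
    isUnitOfIC_algebraMap_add_smul_iff h2 hπ hϖ hπϖ htwo, ← valuation_le_one_iff, lt_iff_le_and_ne]
  tauto

theorem valuation_norm_sub_one_lt_one (h2 : finrank F E = 2)
    (hπ : Algebra.adjoin F {π} = ⊤) (hϖ : Irreducible ϖ) (hπϖ : π ^ 2 = algebraMap F E (-(ϖ : F)))
    (htwo : O.valuation 2 = 1) {x : E} (hx : InMaxIC F O E (x - 1)) :
    O.valuation (Algebra.norm F x - 1) < 1 := by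
  obtain ⟨a, b, rfl⟩ := exists_eq_algebraMap_add_smul h2 hπ x
  have hx1 : algebraMap F E a + b • π - 1 = algebraMap F E (a - 1) + b • π := by
    rw [map_sub, map_one]; abel
  rw [hx1, inMaxIC_algebraMap_add_smul_iff h2 hπ hϖ hπϖ htwo] at hx
  obtain ⟨ha1, hb⟩ := hx
  have ha1' : O.valuation (a + 1) ≤ 1 := by
    rw [valuation_le_one_iff, show a + 1 = a - 1 + 2 by ring]
    exact add_mem ((valuation_le_one_iff O _).1 ha1.le) ((valuation_le_one_iff O _).1 htwo.le)
  rw [norm_algebraMap_add_smul h2 hπ hπϖ,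
    show a ^ 2 + ϖ * b ^ 2 - 1 = (a - 1) * (a + 1) + ϖ * b ^ 2 by ring]
  refine O.valuation.map_add_lt ?_ ?_
  · rw [map_mul]
    exact mul_lt_one_of_nonneg_of_lt_one_left zero_le ha1 ha1'
  · rw [map_mul, map_pow]
    exact mul_lt_one_of_nonneg_of_lt_one_left zero_le (valuation_lt_one_of_irreducible hϖ)
      (pow_le_one₀ zero_le ((O.valuation_le_one_iff b).2 hb))

theorem inMaxIC_mul_inv_sub_one_iff (h2 : finrank F E = 2)
    (hπ : Algebra.adjoin F {π} = ⊤) (hϖ : Irreducible ϖ) (hπϖ : π ^ 2 = algebraMap F E (-(ϖ : F)))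
    (htwo : O.valuation 2 = 1) {a c : O} (hc : IsUnit c) {b : F} (hb : b ∈ O) :
    InMaxIC F O E ((algebraMap F E a + b • π) * (algebraMap F E c)⁻¹ - 1) ↔
      IsLocalRing.residue O a = IsLocalRing.residue O c := by
  have hvc : O.valuation c = 1 := (O.valuation_eq_one_iff c).1 hc
  have hc0 : (c : F) ≠ 0 := by intro h; simp [h] at hvc
  have hx : (algebraMap F E a + b • π) * (algebraMap F E c)⁻¹ - 1 =
      algebraMap F E ((a - c) / c) + (b / c) • π := by
    have hc0' : algebraMap F E c ≠ 0 := (map_ne_zero _).2 hc0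
    simp only [Algebra.smul_def, map_div₀, map_sub]
    field_simp
    ring
  rw [hx, inMaxIC_algebraMap_add_smul_iff h2 hπ hϖ hπϖ htwo, ← valuation_le_one_iff, map_div₀,
    map_div₀, hvc, div_one, div_one, valuation_le_one_iff, and_iff_left hb, ← sub_eq_zero,
    ← map_sub, IsLocalRing.residue_eq_zero_iff, valuation_lt_one_iff]
  rfl

theorem existsUnique_inMaxIC_mul_inv_pow_sub_one (h2 : finrank F E = 2)
    (hπ : Algebra.adjoin F {π} = ⊤) (hϖ : Irreducible ϖ) (hπϖ : π ^ 2 = algebraMap F E (-(ϖ : F)))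
    (htwo : O.valuation 2 = 1) [Finite (ResidueField O)] {ζ : Oˣ}
    (hζ : orderOf ζ = Nat.card (ResidueField O) - 1) {u : E} (hu : IsUnitOfIC F O E u) :
    ∃! j : Fin (orderOf ζ),
      InMaxIC F O E (u * (algebraMap F E ((ζ ^ (j : ℕ) : Oˣ) : O))⁻¹ - 1) := by
  obtain ⟨a, b, rfl⟩ := exists_eq_algebraMap_add_smul h2 hπ u
  obtain ⟨hva, hb⟩ := (isUnitOfIC_algebraMap_add_smul_iff h2 hπ hϖ hπϖ htwo).1 hu
  lift a to O using (O.valuation_le_one_iff a).1 hva.le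
  have hmax (c : Oˣ) := inMaxIC_mul_inv_sub_one_iff h2 hπ hϖ hπϖ htwo (E := E) (a := a) c.isUnit hb
  exact (existsUnique_congr fun j => (hmax _).trans eq_comm).2
    (existsUnique_residue_pow_eq hζ ((O.valuation_eq_one_iff a).2 hva).unit)

end RamifiedQuadratic

theorem stmt16_general
    (F : Type) [Field F] (O : ValuationSubring F)
    (q : ℕ) [Finite (IsLocalRing.ResidueField ↥O)]
    (hq : Nat.card (IsLocalRing.ResidueField ↥O) = q)
    (hqodd : Odd q)
    (ϖ : ↥O) (hϖ : Irreducible ϖ)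
    (ζ : (↥O)ˣ) (hζ : orderOf ζ = q - 1)
    (E₂ : Type) [Field E₂] [Algebra F E₂]
    (hrank2 : Module.finrank F E₂ = 2)
    (ϖ₂ : E₂) (hϖ₂ : ϖ₂ ^ 2 = algebraMap F E₂ (-(ϖ : F)))
    (hgen2 : Algebra.adjoin F {ϖ₂} = ⊤)
    (i : ℂ) (hi : i ^ 2 = -1)
    (η : Fˣ →* ℂˣ)
    (hη1 : ∀ m : ↥O, m ∈ IsLocalRing.maximalIdeal ↥O → etaExt η (((1 + m : ↥O) : F)) = 1)
    (hηζ : etaExt η (((ζ : ↥O) : F)) = i) :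
    (∀ u : E₂, IsUnitOfIC F O E₂ u → InMaxIC F O E₂ (u - 1) →
      etaExt η (Algebra.norm F u) = 1) ∧
    (∃ u : E₂, IsUnitOfIC F O E₂ u ∧ etaExt η (Algebra.norm F u) ≠ 1) ∧
    ∃ T : Finset E₂,
      (∀ x ∈ T, IsUnitOfIC F O E₂ x) ∧
      (∀ u : E₂, IsUnitOfIC F O E₂ u → ∃! x : E₂, x ∈ T ∧ InMaxIC F O E₂ (u * x⁻¹ - 1)) ∧
      ∑ x ∈ T, etaExt η (Algebra.norm F x) = 0 := by
  subst hq
  have htwo : O.valuation 2 = 1 := by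
    exact_mod_cast (O.valuation_eq_one_iff 2).1 (isUnit_two_of_odd_card hqodd)
  have hunit (c : Oˣ) : IsUnitOfIC F O E₂ (algebraMap F E₂ (c : O)) := by
    simpa using (isUnitOfIC_algebraMap_add_smul_iff hrank2 hgen2 hϖ hϖ₂ htwo (b := 0)).2
      ⟨O.valuation_unit c, O.zero_mem⟩
  rw [etaExt_eq_ofUnitHom] at hη1 hηζ ⊢
  have hnorm (j : ℕ) :
      MulChar.ofUnitHom η (Algebra.norm F (algebraMap F E₂ ((ζ ^ j : Oˣ) : O))) = (-1) ^ j := by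
    rw [Algebra.norm_algebraMap, hrank2, Units.val_pow_eq_pow_val, SubmonoidClass.coe_pow,
      ← pow_mul, map_pow, hηζ, pow_mul', hi]
  let f (j : Fin (orderOf ζ)) : E₂ := algebraMap F E₂ ((ζ ^ (j : ℕ) : Oˣ) : O)
  have hf : Function.Injective f := fun j k h => Fin.ext <| pow_injOn_Iio_orderOf j.2 k.2 <|
    Units.ext <| Subtype.ext <| (algebraMap F E₂).injective h
  refine ⟨fun u _ hu => ?_, ⟨_, hunit ζ, ?_⟩, Finset.univ.image f, ?_, fun u hu =>
    Finset.existsUnique_mem_image_univ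
      (existsUnique_inMaxIC_mul_inv_pow_sub_one hrank2 hgen2 hϖ hϖ₂ htwo hζ hu), ?_⟩
  · have hv := valuation_norm_sub_one_lt_one hrank2 hgen2 hϖ hϖ₂ htwo hu
    simpa using hη1 _ ((O.valuation_lt_one_iff ⟨_, (O.valuation_le_one_iff _).1 hv.le⟩).2 hv)
  · rw [← pow_one ζ, hnorm 1]
    norm_num
  · intro x hx
    obtain ⟨j, -, rfl⟩ := Finset.mem_image.1 hx
    exact hunit _
  · rw [Finset.sum_image fun j _ k _ h => hf h, Fin.sum_univ_eq_sum_range (fun j =>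
      MulChar.ofUnitHom η (Algebra.norm F (algebraMap F E₂ ((ζ ^ j : Oˣ) : O))))]
    simp_rw [hnorm, neg_one_geom_sum, hζ, if_pos (Nat.Odd.sub_odd hqodd odd_one)]

theorem stmt16
    (F : Type) [Field F] (O : ValuationSubring F) [IsDiscreteValuationRing ↥O]
    (hcomplete : IsAdicComplete (IsLocalRing.maximalIdeal ↥O) ↥O)
    (q : ℕ) [Finite (IsLocalRing.ResidueField ↥O)]
    (hq : Nat.card (IsLocalRing.ResidueField ↥O) = q)
    (hqodd : Odd q) (hq4 : 4 ∣ q - 1)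
    (ϖ : ↥O) (hϖ : Irreducible ϖ)
    (ζ : (↥O)ˣ) (hζ : orderOf ζ = q - 1)
    (E₂ : Type) [Field E₂] [Algebra F E₂] [FiniteDimensional F E₂]
    (hrank2 : Module.finrank F E₂ = 2)
    (ϖ₂ : E₂) (hϖ₂ : ϖ₂ ^ 2 = algebraMap F E₂ (-(ϖ : F)))
    (hgen2 : Algebra.adjoin F {ϖ₂} = ⊤)
    (i : ℂ) (hi : i ^ 2 = -1)
    (η : Fˣ →* ℂˣ)
    (hηϖ : etaExt η ((ϖ : F)) = 1)
    (hη1 : ∀ m : ↥O, m ∈ IsLocalRing.maximalIdeal ↥O → etaExt η (((1 + m : ↥O) : F)) = 1)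
    (hηζ : etaExt η (((ζ : ↥O) : F)) = i) :
    (∀ u : E₂, IsUnitOfIC F O E₂ u → InMaxIC F O E₂ (u - 1) →
      etaExt η (Algebra.norm F u) = 1) ∧
    (∃ u : E₂, IsUnitOfIC F O E₂ u ∧ etaExt η (Algebra.norm F u) ≠ 1) ∧
    ∃ T : Finset E₂,
      (∀ x ∈ T, IsUnitOfIC F O E₂ x) ∧
      (∀ u : E₂, IsUnitOfIC F O E₂ u → ∃! x : E₂, x ∈ T ∧ InMaxIC F O E₂ (u * x⁻¹ - 1)) ∧
      ∑ x ∈ T, etaExt η (Algebra.norm F x) = 0 :=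
  stmt16_general F O q hq hqodd ϖ hϖ ζ hζ E₂ hrank2 ϖ₂ hϖ₂ hgen2 i hi η hη1 hηζ
end
end
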